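/- arXiv:2011.12074 — 4 statements merged into one kernel-verified Lean document; each statement's English description precedes it below -/
import Mathlib

section
/- For the matrix X(λ) with s ∈ {-1,1}, the adjugate satisfies adj(X(λ)) = ((3λ² - 16)/256)·Y(λ), where Y(λ) is the 6×6 matrix with diagonal entries λ² - 16 and off-diagonal structure: Y[1,3] = Y[1,5] = λ², Y[1,4] = 4sλ, Y[1,6] = -4sλ, and analogous entries per the cyclic symmetry of the triangle vertices, so that X(λ)·Y(λ) = (3λ² - 16)·I. -/
set_option maxRecDepth 20000
set_option maxHeartbeats 4000000

open Matrix

@[simp] lemma cons_val_five' {α : Type*} (x : α) (u : Fin 5 → α) :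
    Matrix.vecCons x u 5 = Matrix.vecHead
      (Matrix.vecTail (Matrix.vecTail (Matrix.vecTail (Matrix.vecTail u)))) :=
  rfl

/-- The 6×6 matrix from the Lagrangian stationarity conditions of OTPPAO. -/
noncomputable def Xmat (s lam : ℝ) : Matrix (Fin 6) (Fin 6) ℝ :=
  !![1, 0, 0, s*lam/4, 0, -(s*lam/4);
     0, 1, -(s*lam/4), 0, s*lam/4, 0;
     0, -(s*lam/4), 1, 0, 0, s*lam/4;
     s*lam/4, 0, 0, 1, -(s*lam/4), 0;
     0, s*lam/4, 0, -(s*lam/4), 1, 0;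
     -(s*lam/4), 0, s*lam/4, 0, 0, 1]

/-- The matrix `Y(λ)` proportional to the adjugate of `X(λ)`. -/
noncomputable def Ymat (s lam : ℝ) : Matrix (Fin 6) (Fin 6) ℝ :=
  !![lam^2-16, 0, lam^2, 4*s*lam, lam^2, -(4*s*lam);
     0, lam^2-16, -(4*s*lam), lam^2, 4*s*lam, lam^2;
     lam^2, -(4*s*lam), lam^2-16, 0, lam^2, 4*s*lam;
     4*s*lam, lam^2, 0, lam^2-16, -(4*s*lam), lam^2;
     lam^2, 4*s*lam, lam^2, -(4*s*lam), lam^2-16, 0;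
     -(4*s*lam), lam^2, 4*s*lam, lam^2, 0, lam^2-16]

lemma Xmat_neg (lam : ℝ) : Xmat (-1) lam = Xmat 1 (-lam) := by
  ext i j
  fin_cases i <;> fin_cases j <;> (simp [Xmat]; try ring)

lemma Ymat_neg (lam : ℝ) : Ymat (-1) lam = Ymat 1 (-lam) := by
  ext i j
  fin_cases i <;> fin_cases j <;> (simp [Ymat]; try ring)

lemma prod_one (lam : ℝ) :
    Xmat 1 lam * Ymat 1 lam = (3 * lam ^ 2 - 16) • (1 : Matrix (Fin 6) (Fin 6) ℝ) := by
  ext i j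
  fin_cases i <;> fin_cases j <;>
    (simp [Xmat, Ymat, mul_apply, Fin.sum_univ_six, Matrix.one_apply]; try ring)

lemma det_one (lam : ℝ) : (Xmat 1 lam).det = (3 * lam ^ 2 - 16) ^ 2 / 256 := by
  simp (config := { decide := true, maxSteps := 2000000 }) only [Xmat, det_succ_row_zero,
      Fin.sum_univ_succ, det_unique,
      Fin.default_eq_zero, submatrix_apply, Fin.succAbove, Fin.lt_def, Fin.castSucc, Fin.castAdd,
      Fin.castLE, Fin.succ,
      Finset.univ_unique, Finset.sum_singleton, Fin.val_zero, Fin.val_succ,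
      of_apply, cons_val', cons_val_zero, cons_val_succ, empty_val', cons_val_fin_one,
      cons_val_one, head_cons, head_fin_const, Fin.val_eq_zero, pow_succ, pow_zero]
  norm_num
  ring

lemma key_one (lam : ℝ) :
    (3 * lam ^ 2 - 16) • (Xmat 1 lam).adjugate =
      (3 * lam ^ 2 - 16) • (((3 * lam ^ 2 - 16) / 256) • Ymat 1 lam) := by
  have h1 : (3 * lam ^ 2 - 16) • (Xmat 1 lam).adjugate
      = (Xmat 1 lam).adjugate * ((3 * lam ^ 2 - 16) • (1 : Matrix (Fin 6) (Fin 6) ℝ)) := by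
    rw [Matrix.mul_smul, mul_one]
  rw [h1, ← prod_one, ← Matrix.mul_assoc, Matrix.adjugate_mul, Matrix.smul_mul, one_mul,
    det_one, smul_smul]
  congr 1
  ring

lemma adj_one : ∀ lam : ℝ,
    (Xmat 1 lam).adjugate = ((3 * lam ^ 2 - 16) / 256) • Ymat 1 lam := by
  have hX : Continuous fun lam : ℝ => Xmat 1 lam := by
    apply continuous_matrix
    intro i j
    fin_cases i <;> fin_cases j <;> (simp [Xmat]; fun_prop)
  have hY : Continuous fun lam : ℝ => Ymat 1 lam := by
    apply continuous_matrix
    intro i j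
    fin_cases i <;> fin_cases j <;> (simp [Ymat]; fun_prop)
  have hf : Continuous fun lam : ℝ => (Xmat 1 lam).adjugate := hX.matrix_adjugate
  have hg : Continuous fun lam : ℝ => ((3 * lam ^ 2 - 16) / 256) • Ymat 1 lam := by
    exact Continuous.smul (by fun_prop : Continuous fun lam : ℝ => (3 * lam ^ 2 - 16) / 256) hY
  have hcount : ({lam : ℝ | 3 * lam ^ 2 - 16 = 0}).Countable := by
    apply Set.Countable.mono _
      (Set.Finite.countable ((Set.finite_singleton (-Real.sqrt (16/3))).insert
        (Real.sqrt (16/3))))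
    intro l hl
    have hl' : l ^ 2 = Real.sqrt (16/3) ^ 2 := by
      rw [Real.sq_sqrt (by norm_num)]
      have : (3 : ℝ) * l ^ 2 - 16 = 0 := hl
      linarith
    rcases sq_eq_sq_iff_eq_or_eq_neg.mp hl' with h | h
    · exact Set.mem_insert_iff.mpr (Or.inl h)
    · exact Set.mem_insert_iff.mpr (Or.inr (Set.mem_singleton_iff.mpr h))
  have hdense : Dense {lam : ℝ | 3 * lam ^ 2 - 16 = 0}ᶜ :=
    Set.Countable.dense_compl ℝ hcount
  have heq : Set.EqOn (fun lam : ℝ => (Xmat 1 lam).adjugate)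
      (fun lam : ℝ => ((3 * lam ^ 2 - 16) / 256) • Ymat 1 lam)
      {lam : ℝ | 3 * lam ^ 2 - 16 = 0}ᶜ := fun l hl =>
    smul_right_injective (Matrix (Fin 6) (Fin 6) ℝ) hl (key_one l)
  have := hf.ext_on hdense hg heq
  intro lam
  exact congrFun this lam

theorem stmt3 (s lam : ℝ) (hs : s = -1 ∨ s = 1) :
    Xmat s lam * Ymat s lam = (3 * lam ^ 2 - 16) • (1 : Matrix (Fin 6) (Fin 6) ℝ) ∧
    (Xmat s lam).adjugate = ((3 * lam ^ 2 - 16) / 256) • Ymat s lam := by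
  rcases hs with rfl | rfl
  · rw [Xmat_neg, Ymat_neg]
    constructor
    · have := prod_one (-lam)
      rwa [neg_pow, show ((-1:ℝ))^2 = 1 by norm_num, one_mul] at this
    · have := adj_one (-lam)
      rwa [neg_pow, show ((-1:ℝ))^2 = 1 by norm_num, one_mul] at this
  · exact ⟨prod_one lam, adj_one lam⟩
end

section
/- The matrix X(λ_o) obtained by setting |λ| = λ_o = 4/√3 in the Lagrangian matrix has rank exactly 4: its leading 4×4 principal minor equals 4/9 (hence is nonzero), while the determinant and all 5×5 minors vanish. -/
open Matrix

/-- Same matrix written in terms of the single parameter `t = s*lam/4`. -/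
noncomputable def Mt (t : ℝ) : Matrix (Fin 6) (Fin 6) ℝ :=
  !![1, 0, 0, t, 0, -t;
     0, 1, -t, 0, t, 0;
     0, -t, 1, 0, 0, t;
     t, 0, 0, 1, -t, 0;
     0, t, 0, -t, 1, 0;
     -t, 0, t, 0, 0, 1]

lemma cv6_5 (x : ℝ) (u : Fin 5 → ℝ) : Matrix.vecCons x u 5 = u 4 := rfl
lemma cv5_4 (x : ℝ) (u : Fin 4 → ℝ) : Matrix.vecCons x u 4 = u 3 := rfl
lemma cv4_3 (x : ℝ) (u : Fin 3 → ℝ) : Matrix.vecCons x u 3 = u 2 := rfl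
lemma cv3_2 (x : ℝ) (u : Fin 2 → ℝ) : Matrix.vecCons x u 2 = u 1 := rfl

lemma Xmat_eq_Mt (s lam : ℝ) : Xmat s lam = Mt (s*lam/4) := rfl

/-- A submatrix is a product of selection matrices with the original one. -/
lemma submatrix_eq_mul {k l : ℕ} (A : Matrix (Fin 6) (Fin 6) ℝ)
    (f : Fin k → Fin 6) (g : Fin l → Fin 6) :
    A.submatrix f g =
      (Matrix.of fun i j => if f i = j then (1:ℝ) else 0) * A *
      (Matrix.of fun i j => if g j = i then (1:ℝ) else 0) := by
  ext i j
  simp [Matrix.mul_apply, Finset.sum_ite_eq, ite_mul, mul_ite,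
    Finset.sum_ite_eq']

lemma rank_submatrix_le' {k l : ℕ} (A : Matrix (Fin 6) (Fin 6) ℝ)
    (f : Fin k → Fin 6) (g : Fin l → Fin 6) :
    (A.submatrix f g).rank ≤ A.rank := by
  rw [submatrix_eq_mul A f g]
  exact (Matrix.rank_mul_le_left _ _).trans (Matrix.rank_mul_le_right _ _)

lemma det_eq_zero_of_rank_lt {n : ℕ} (A : Matrix (Fin n) (Fin n) ℝ)
    (h : A.rank < n) : A.det = 0 := by
  by_contra hd
  have : IsUnit A := (Matrix.isUnit_iff_isUnit_det A).2 (isUnit_iff_ne_zero.2 hd)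
  rw [Matrix.rank_of_isUnit A this, Fintype.card_fin] at h
  exact lt_irrefl _ h

lemma det4_Mt (t : ℝ) (ht : t^2 = 1/3) :
    ((Mt t).submatrix (Fin.castLE (by norm_num : (4:ℕ) ≤ 6))
        (Fin.castLE (by norm_num : (4:ℕ) ≤ 6))).det = 4 / 9 := by
  have h4 : ((Mt t).submatrix (Fin.castLE (by norm_num : (4:ℕ) ≤ 6))
      (Fin.castLE (by norm_num : (4:ℕ) ≤ 6))) =
      !![1, 0, 0, t; 0, 1, -t, 0; 0, -t, 1, 0; t, 0, 0, 1] := by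
    ext i j
    fin_cases i <;> fin_cases j <;> rfl
  rw [h4]
  simp [Matrix.det_succ_row_zero, Fin.sum_univ_succ, Fin.succAbove,
    Matrix.cons_val_zero, Matrix.cons_val_one, Matrix.head_cons,
    show ((Fin.castSucc 2 : Fin 4)) = 2 from rfl]
  linear_combination (t^2 - 2/3 - 1) * ht

/-- Factorization showing rank ≤ 4. -/
lemma Mt_factor (t : ℝ) (ht : t^2 = 1/3) :
    Mt t =
      (!![1,0,0,0; 0,1,0,0; 0,0,1,0; 0,0,0,1;
          1/2, 3*t/2, 1/2, -(3*t/2); -(3*t/2), 1/2, 3*t/2, 1/2] :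
        Matrix (Fin 6) (Fin 4) ℝ) *
      (!![1, 0, 0, t, 0, -t;
          0, 1, -t, 0, t, 0;
          0, -t, 1, 0, 0, t;
          t, 0, 0, 1, -t, 0] : Matrix (Fin 4) (Fin 6) ℝ) := by
  ext i j
  fin_cases i <;> fin_cases j <;>
    simp [Matrix.mul_apply, Fin.sum_univ_succ, Mt, cv6_5, cv5_4, cv4_3, cv3_2] <;>
    first
      | ring1
      | linear_combination (3/2 : ℝ) * ht
      | linear_combination (-(3/2) : ℝ) * ht
      | linear_combination (3 : ℝ) * ht
      | linear_combination (-3 : ℝ) * ht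

lemma rank_Mt_le (t : ℝ) (ht : t^2 = 1/3) : (Mt t).rank ≤ 4 := by
  rw [Mt_factor t ht]
  refine (Matrix.rank_mul_le_right _ _).trans ?_
  exact (Matrix.rank_le_card_height _).trans (by simp)

lemma rank_Mt (t : ℝ) (ht : t^2 = 1/3) : (Mt t).rank = 4 := by
  refine le_antisymm (rank_Mt_le t ht) ?_
  have hd := det4_Mt t ht
  have hu : IsUnit ((Mt t).submatrix (Fin.castLE (by norm_num : (4:ℕ) ≤ 6))
      (Fin.castLE (by norm_num : (4:ℕ) ≤ 6))) := by
    rw [Matrix.isUnit_iff_isUnit_det, hd]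
    norm_num
  have := Matrix.rank_of_isUnit _ hu
  rw [Fintype.card_fin] at this
  calc (4:ℕ) = _ := this.symm
    _ ≤ (Mt t).rank := rank_submatrix_le' _ _ _

theorem stmt11 (s lam : ℝ) (hs : s = -1 ∨ s = 1)
    (hlam : |lam| = 4 / Real.sqrt 3) :
    (Xmat s lam).rank = 4 ∧
    ((Xmat s lam).submatrix (Fin.castLE (by norm_num : (4:ℕ) ≤ 6))
        (Fin.castLE (by norm_num : (4:ℕ) ≤ 6))).det = 4 / 9 ∧
    (Xmat s lam).det = 0 ∧
    (∀ f g : Fin 5 → Fin 6, Function.Injective f → Function.Injective g →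
      ((Xmat s lam).submatrix f g).det = 0) := by
  have hs2 : s^2 = 1 := by rcases hs with h | h <;> rw [h] <;> norm_num
  have hl2 : lam^2 = 16/3 := by
    have := congrArg (fun x => x^2) hlam
    simp only [sq_abs, div_pow] at this
    rw [this, Real.sq_sqrt (by norm_num : (3:ℝ) ≥ 0)]
    norm_num
  have ht : (s*lam/4)^2 = 1/3 := by
    field_simp
    nlinarith [hs2, hl2]
  rw [Xmat_eq_Mt]
  set t := s*lam/4
  have hrank := rank_Mt t ht
  refine ⟨hrank, det4_Mt t ht, ?_, ?_⟩
  · exact det_eq_zero_of_rank_lt _ (by rw [hrank]; norm_num)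
  · intro f g _ _
    refine det_eq_zero_of_rank_lt _ ?_
    have := rank_submatrix_le' (Mt t) f g
    omega
end

section
/- The two vectors v_1 = (-1/2, -s'√3/2, -1/2, s'√3/2, 1, 0) and v_2 = (s'√3/2, -1/2, -s'√3/2, -1/2, 0, 1), where s' = s·sign(λ)·(2/λ_o)·(λ_o/2) = s·sign(λ) and √3/2 = 2/λ_o with λ_o = 4/√3, span the null space of X(λ) at |λ| = λ_o; i.e., X(λ)v_1 = 0 and X(λ)v_2 = 0, and v_1, v_2 are linearly independent. -/
open Matrix

set_option maxHeartbeats 1000000 in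
theorem stmt12 (s lam : ℝ) (hs : s = -1 ∨ s = 1)
    (hlam : |lam| = 4 / Real.sqrt 3) :
    let lamo : ℝ := 4 / Real.sqrt 3
    let k : ℝ := s * Real.sign lam
    let v1 : Fin 6 → ℝ := ![-(1/2), -(2*k/lamo), -(1/2), 2*k/lamo, 1, 0]
    let v2 : Fin 6 → ℝ := ![2*k/lamo, -(1/2), -(2*k/lamo), -(1/2), 0, 1]
    Xmat s lam *ᵥ v1 = 0 ∧ Xmat s lam *ᵥ v2 = 0 ∧
      LinearIndependent ℝ ![v1, v2] := by
  intro lamo k v1 v2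
  have hr : Real.sqrt 3 > 0 := Real.sqrt_pos.mpr (by norm_num)
  have hr2 : Real.sqrt 3 * Real.sqrt 3 = 3 := Real.mul_self_sqrt (by norm_num)
  have hlne : lam ≠ 0 := by
    intro h
    rw [h, abs_zero] at hlam
    exact absurd hlam.symm (ne_of_gt (by positivity))
  have hsign : Real.sign lam * |lam| = lam := by
    rcases lt_or_gt_of_ne hlne with h | h
    · rw [Real.sign_of_neg h, abs_of_neg h]; ring
    · rw [Real.sign_of_pos h, abs_of_pos h]; ring
  have hslam : s * lam = k * (4 / Real.sqrt 3) := by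
    show s * lam = s * Real.sign lam * (4 / Real.sqrt 3)
    rw [← hlam, mul_assoc, hsign]
  have hk2 : k * k = 1 := by
    have hsign2 : Real.sign lam * Real.sign lam = 1 := by
      rcases lt_or_gt_of_ne hlne with h | h
      · rw [Real.sign_of_neg h]; norm_num
      · rw [Real.sign_of_pos h]; norm_num
    show (s * Real.sign lam) * (s * Real.sign lam) = 1
    rcases hs with h | h <;> rw [h] <;> nlinarith [hsign2]
  have ha2 : (s * lam) * (s * lam) = 16 / 3 := by
    rw [hslam]
    have : k * (4 / Real.sqrt 3) * (k * (4 / Real.sqrt 3)) = (k * k) * 16 / (Real.sqrt 3 * Real.sqrt 3) := by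
      field_simp; ring
    rw [this, hk2, hr2]; norm_num
  have hb : 2 * k / lamo = 3 * (s * lam) / 8 := by
    show 2 * k / (4 / Real.sqrt 3) = 3 * (s * lam) / 8
    rw [hslam]
    field_simp
    linear_combination (16 * k) * hr2
  have c56 : ∀ (a : ℝ) (u : Fin 5 → ℝ), Matrix.vecCons a u (5 : Fin 6) = u 4 := fun _ _ => rfl
  have c46 : ∀ (a : ℝ) (u : Fin 5 → ℝ), Matrix.vecCons a u (4 : Fin 6) = u 3 := fun _ _ => rfl
  have c45 : ∀ (a : ℝ) (u : Fin 4 → ℝ), Matrix.vecCons a u (4 : Fin 5) = u 3 := fun _ _ => rfl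
  have c34 : ∀ (a : ℝ) (u : Fin 3 → ℝ), Matrix.vecCons a u (3 : Fin 4) = u 2 := fun _ _ => rfl
  have c23 : ∀ (a : ℝ) (u : Fin 2 → ℝ), Matrix.vecCons a u (2 : Fin 3) = u 1 := fun _ _ => rfl
  have c12 : ∀ (a : ℝ) (u : Fin 1 → ℝ), Matrix.vecCons a u (1 : Fin 2) = u 0 := fun _ _ => rfl
  refine ⟨?_, ?_, ?_⟩
  · funext i
    fin_cases i <;>
      simp [Xmat, mulVec, dotProduct, v1, Fin.sum_univ_six, hb, c56, c46, c45, c34, c23, c12] <;>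
      nlinarith [ha2]
  · funext i
    fin_cases i <;>
      simp [Xmat, mulVec, dotProduct, v2, Fin.sum_univ_six, hb, c56, c46, c45, c34, c23, c12] <;>
      nlinarith [ha2]
  · rw [LinearIndependent.pair_iff]
    intro a b hab
    have h4 := congrFun hab 4
    have h5 := congrFun hab 5
    simp [v1, v2, c56, c46, c45, c34, c23, c12] at h4 h5
    exact ⟨h4, h5⟩
end

section
/- For v' = β₁v₁ + β₂v₂ with the null-space basis v₁, v₂ of X at |λ| = λ_o, the signed area satisfies A*(β₁v₁ + β₂v₂) = -s·sign(λ)·3(β₁² + β₂²)/λ_o, where λ_o = 4/√3. -/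
/-- Signed shoelace area of the triangle represented by a vector in `ℝ^6`. -/
noncomputable def signedAreaV (v : Fin 6 → ℝ) : ℝ :=
  ((v 0 - v 4) * (v 3 - v 1) - (v 0 - v 2) * (v 5 - v 1)) / 2

theorem stmt14 (s lam β₁ β₂ : ℝ) (hs : s = -1 ∨ s = 1) (hlam : lam ≠ 0) :
    let lamo : ℝ := 4 / Real.sqrt 3
    let k : ℝ := s * Real.sign lam
    let v1 : Fin 6 → ℝ := ![-(1/2), -(2*k/lamo), -(1/2), 2*k/lamo, 1, 0]
    let v2 : Fin 6 → ℝ := ![2*k/lamo, -(1/2), -(2*k/lamo), -(1/2), 0, 1]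
    signedAreaV (β₁ • v1 + β₂ • v2) =
      -(s * Real.sign lam * 3 * (β₁ ^ 2 + β₂ ^ 2) / lamo) := by
  intro lamo k v1 v2
  have h3 : Real.sqrt 3 ≠ 0 := by positivity
  have hlo : lamo ≠ 0 := by
    simp only [lamo]
    positivity
  simp only [signedAreaV, Pi.add_apply, Pi.smul_apply, smul_eq_mul, v1, v2,
    Matrix.cons_val_zero, Matrix.cons_val_one, Matrix.head_cons, Matrix.cons_val_two,
    Matrix.cons_val_three, Matrix.cons_val_four, Matrix.head_fin_const, Matrix.cons_val_succ, show (5:Fin 6)=⟨5, by norm_num⟩ from rfl, Matrix.cons_val_succ, Fin.mk_one]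
  norm_num
  field_simp
  ring
end
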